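/- arXiv:1306.4164 — 2 statements merged into one kernel-verified Lean document; each statement's English description precedes it below -/
import Mathlib

section
/- For every odd integer n ≥ 5, the additively weighted Harary index of the cycle C_n is strictly smaller than that of the cycle-star graph CS_{3,n−3}; equivalently, 4n·H_{(n−1)/2} < (3/2)(n² − n + 2). -/
open Finset SimpleGraph

/-- Degree of a vertex (number of neighbors). -/
noncomputable def deg {V : Type*} [Fintype V] (G : SimpleGraph V) (v : V) : ℕ :=
  Nat.card {w // G.Adj v w}

open scoped Classical in
/-- Additively weighted Harary index: sum over unordered pairs of distinct
vertices of (deg u + deg v) / d(u,v). -/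
noncomputable def HA {V : Type*} [Fintype V] (G : SimpleGraph V) : ℝ :=
  (1/2) * ∑ u : V, ∑ v : V, if u = v then 0 else
    ((deg G u + deg G v : ℕ) : ℝ) / (G.dist u v)

/-- A unicyclic graph: connected with as many edges as vertices. -/
def Unicyclic {V : Type*} [Fintype V] (G : SimpleGraph V) : Prop :=
  G.Connected ∧ Nat.card G.edgeSet = Fintype.card V

/-- k-th harmonicNum number. -/
noncomputable def harmonicNum (k : ℕ) : ℝ := ∑ i ∈ Finset.range k, (1 : ℝ) / (i + 1)

/-- CS_{3,n-3}: a triangle on vertices 0,1,2 with n-3 leaves attached to vertex 0. -/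
def cycleStar3 (n : ℕ) : SimpleGraph (Fin n) :=
  SimpleGraph.fromRel (fun i j => ((i : ℕ) < 3 ∧ (j : ℕ) < 3) ∨ ((i : ℕ) = 0 ∧ 3 ≤ (j : ℕ)))

/-- CP_{k,n-k}: cycle 0,...,k-1 with the path k,k+1,...,n-1 attached to vertex 0
(for k = n this is just the cycle C_n). -/
def cyclePath (n k : ℕ) : SimpleGraph (Fin n) :=
  SimpleGraph.fromRel (fun i j =>
    ((i : ℕ) < k ∧ (j : ℕ) < k ∧ ((j : ℕ) = (i : ℕ) + 1 ∨ ((i : ℕ) = 0 ∧ (j : ℕ) = k - 1)))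
    ∨ ((i : ℕ) = 0 ∧ (j : ℕ) = k)
    ∨ (k ≤ (i : ℕ) ∧ (j : ℕ) = (i : ℕ) + 1))

/-- A vertex lies on a cycle of G. -/
def OnCycle {V : Type*} (G : SimpleGraph V) (v : V) : Prop :=
  ∃ p : G.Walk v v, p.IsCycle

/-- Cycle-star graph: unicyclic, and every vertex of degree ≥ 2 lies on the cycle
(equivalently, every non-cycle vertex is a leaf attached to a cycle vertex). -/
def IsCycleStar {V : Type*} [Fintype V] (G : SimpleGraph V) : Prop :=
  Unicyclic G ∧ ∀ v, 2 ≤ deg G v → OnCycle G v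

/-- Cycle-path graph: unicyclic, cycle vertices have degree ≤ 3 and non-cycle
vertices have degree ≤ 2 (at most one pendant path per cycle vertex). -/
def IsCyclePath {V : Type*} [Fintype V] (G : SimpleGraph V) : Prop :=
  Unicyclic G ∧ ∀ v, (OnCycle G v → deg G v ≤ 3) ∧ (¬ OnCycle G v → deg G v ≤ 2)

/-- Length of the unique cycle of a unicyclic graph: number of vertices on a cycle. -/
noncomputable def cycleLength {V : Type*} [Fintype V] (G : SimpleGraph V) : ℕ :=
  Nat.card {v // OnCycle G v}

/-- Value of H_A(CP_{3,n-3}). -/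
noncomputable def CPval (n : ℕ) : ℝ :=
  4 * ∑ i ∈ Finset.range (n - 2), harmonicNum (n - i - 2)
    + harmonicNum (n - 3) + 3 * harmonicNum (n - 2) + (6 * (n : ℝ) - 13) / ((n : ℝ) - 2)

/-!
For distinct `u, v`, `1 / d(u,v)` is `1` on edges and at most `1/2` otherwise, with equality when
the diameter is at most two. Summing `(deg u + deg v) / d(u,v)` and symmetrising therefore gives
`H_A(G) ≤ ½ ∑_v deg v (n - 1 + deg v)`, with equality in diameter two. For the 2-regular `C_n`
the bound is `n (n + 1)`; the cycle-star `CS_{3,n-3}` has a universal vertex, hence diameter two,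
and the formula gives exactly `3/2 (n² - n + 2)`, which exceeds `n (n + 1)` once `n ≥ 4`.
Finally `H_k ≤ (k + 1) / 2` bounds `4 n H_{(n-1)/2}` by `n (n + 1)` as well.
-/

lemma sum_sum_add_mul_of_symm {ι R : Type*} [Fintype ι] [CommSemiring R] (a : ι → R)
    (c : ι → ι → R) (hc : ∀ i j, c i j = c j i) :
    ∑ i, ∑ j, (a i + a j) * c i j = 2 * ∑ i, a i * ∑ j, c i j := by
  have hswap : ∑ i, ∑ j, a j * c i j = ∑ i, ∑ j, a i * c i j := by
    rw [sum_comm]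
    exact sum_congr rfl fun i _ => sum_congr rfl fun j _ => by rw [hc]
  simp only [add_mul, sum_add_distrib, hswap, mul_sum, two_mul]

lemma harmonicNum_le (k : ℕ) : harmonicNum k ≤ (k + 1) / 2 := by
  cases k with
  | zero => norm_num [harmonicNum]
  | succ k =>
    have hterm : ∀ i ∈ range k, (1 : ℝ) / ((i + 1 : ℕ) + 1) ≤ 1 / 2 := fun i _ => by
      gcongr
      push_cast
      linarith [i.cast_nonneg (α := ℝ)]
    have htail := sum_le_card_nsmul _ _ _ hterm
    rw [card_range, nsmul_eq_mul] at htail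
    rw [harmonicNum, sum_range_succ']
    push_cast at htail ⊢
    linarith

namespace SimpleGraph

variable {V : Type*} (G : SimpleGraph V)

lemma ediam_le_two_of_forall_adj (z : V) (hz : ∀ v, z ≠ v → G.Adj z v) : G.ediam ≤ 2 :=
  (ediam_le_two_mul_eccent z).trans <| by
    simpa using mul_le_mul_right ((eccent_le_one_iff z).mpr hz) (2 : ℕ∞)

/-- The value of `(G.dist u v)⁻¹` when `G` has diameter at most two (`0⁻¹ = 0` on the diagonal). -/
noncomputable def diamTwoInvDist [DecidableEq V] [DecidableRel G.Adj] (u v : V) : ℝ :=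
  ((if u = v then 0 else 1) + if G.Adj u v then 1 else 0) / 2

variable [DecidableEq V] [DecidableRel G.Adj]

lemma diamTwoInvDist_comm (u v : V) : G.diamTwoInvDist u v = G.diamTwoInvDist v u := by
  simp only [diamTwoInvDist, eq_comm, G.adj_comm]

lemma inv_dist_le_diamTwoInvDist (u v : V) : (G.dist u v : ℝ)⁻¹ ≤ G.diamTwoInvDist u v := by
  by_cases huv : u = v
  · simp [diamTwoInvDist, huv]
  by_cases hadj : G.Adj u v
  · simp [diamTwoInvDist, dist_eq_one_iff_adj.mpr hadj, huv, hadj]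
  rw [diamTwoInvDist, if_neg huv, if_neg hadj]
  have hne_one : G.dist u v ≠ 1 := mt dist_eq_one_iff_adj.mp hadj
  rcases Nat.eq_zero_or_pos (G.dist u v) with h0 | hpos
  · simp [h0]
  have h2 : (2 : ℝ) ≤ G.dist u v := by exact_mod_cast (by omega : 2 ≤ G.dist u v)
  simpa using inv_anti₀ two_pos h2

lemma inv_dist_eq_diamTwoInvDist (hG : G.ediam ≤ 2) (u v : V) :
    (G.dist u v : ℝ)⁻¹ = G.diamTwoInvDist u v := by
  by_cases huv : u = v
  · simp [diamTwoInvDist, huv]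
  by_cases hadj : G.Adj u v
  · simp [diamTwoInvDist, dist_eq_one_iff_adj.mpr hadj, huv, hadj]
  have hle : G.edist u v ≤ 2 := edist_le_ediam.trans hG
  have hr : G.Reachable u v := reachable_of_edist_ne_top (ne_top_of_le_ne_top (by decide) hle)
  rw [← hr.coe_dist_eq_edist] at hle
  have h2 : G.dist u v = 2 := by
    have := hr.pos_dist_of_ne huv
    have := mt dist_eq_one_iff_adj.mp hadj
    have : G.dist u v ≤ 2 := by exact_mod_cast hle
    omega
  simp [diamTwoInvDist, h2, huv, hadj]

end SimpleGraph

section HararyIndex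

variable {V : Type*} [Fintype V]

lemma deg_eq_degree (G : SimpleGraph V) [DecidableRel G.Adj] (v : V) :
    deg G v = G.degree v := by
  rw [deg, Nat.card_eq_fintype_card, ← card_neighborSet_eq_degree]
  rfl

lemma sum_diamTwoInvDist (G : SimpleGraph V) [DecidableEq V] [DecidableRel G.Adj] (u : V) :
    ∑ v, G.diamTwoInvDist u v = (Fintype.card V - 1 + deg G u : ℝ) / 2 := by
  have hcard : ∑ v, (if u = v then (0 : ℝ) else 1) = Fintype.card V - 1 := by
    rw [sum_ite, sum_const_zero, zero_add, sum_const, nsmul_one, filter_ne, card_erase_of_mem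
      (mem_univ u), card_univ, Nat.cast_sub (Fintype.card_pos_iff.mpr ⟨u⟩), Nat.cast_one]
  simp only [diamTwoInvDist]
  rw [← sum_div, sum_add_distrib, hcard, sum_boole, ← neighborFinset_eq_filter,
    card_neighborFinset_eq_degree, deg_eq_degree]

lemma half_sum_sum_deg_mul_diamTwoInvDist (G : SimpleGraph V) [DecidableEq V]
    [DecidableRel G.Adj] :
    1 / 2 * ∑ u, ∑ v, (deg G u + deg G v : ℝ) * G.diamTwoInvDist u v
      = ∑ v, (deg G v : ℝ) * (Fintype.card V - 1 + deg G v) / 2 := by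
  rw [sum_sum_add_mul_of_symm _ _ G.diamTwoInvDist_comm, ← mul_assoc,
    one_div_mul_cancel two_ne_zero, one_mul]
  simp only [sum_diamTwoInvDist, mul_div_assoc]

lemma HA_eq_half_sum_sum_mul_inv_dist (G : SimpleGraph V) :
    HA G = 1 / 2 * ∑ u, ∑ v, (deg G u + deg G v : ℝ) * (G.dist u v : ℝ)⁻¹ := by
  rw [HA]
  congr 1
  refine sum_congr rfl fun u _ => sum_congr rfl fun v _ => ?_
  split_ifs with h
  · simp [h]
  · push_cast
    rfl

theorem HA_le (G : SimpleGraph V) :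
    HA G ≤ ∑ v, (deg G v : ℝ) * (Fintype.card V - 1 + deg G v) / 2 := by
  classical
  rw [HA_eq_half_sum_sum_mul_inv_dist, ← half_sum_sum_deg_mul_diamTwoInvDist]
  gcongr with u _ v _
  exact G.inv_dist_le_diamTwoInvDist u v

theorem HA_eq_of_ediam_le_two (G : SimpleGraph V) (hG : G.ediam ≤ 2) :
    HA G = ∑ v, (deg G v : ℝ) * (Fintype.card V - 1 + deg G v) / 2 := by
  classical
  simp only [HA_eq_half_sum_sum_mul_inv_dist, ← half_sum_sum_deg_mul_diamTwoInvDist,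
    G.inv_dist_eq_diamTwoInvDist hG]

end HararyIndex

theorem HA_cycleGraph_le (n : ℕ) (hn : 3 ≤ n) : HA (cycleGraph n) ≤ n * (n + 1) := by
  classical
  obtain ⟨m, rfl⟩ : ∃ m, n = m + 3 := ⟨n - 3, by omega⟩
  refine (HA_le _).trans_eq ?_
  simp only [deg_eq_degree, cycleGraph_degree_three_le, sum_const, card_univ, Fintype.card_fin,
    nsmul_eq_mul]
  push_cast
  ring

lemma cycleStar3_adj {n : ℕ} (u v : Fin n) :
    (cycleStar3 n).Adj u v ↔ u ≠ v ∧ ((u : ℕ) = 0 ∨ (v : ℕ) = 0 ∨ ((u : ℕ) < 3 ∧ (v : ℕ) < 3)) := by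
  simp only [cycleStar3, fromRel_adj, ne_eq, Fin.ext_iff]
  omega

lemma cycleStar3_ediam_le_two {n : ℕ} (hn : 0 < n) : (cycleStar3 n).ediam ≤ 2 :=
  ediam_le_two_of_forall_adj _ ⟨0, hn⟩ fun v hv => (cycleStar3_adj _ v).mpr ⟨hv, Or.inl rfl⟩

lemma cycleStar3_deg {n : ℕ} (hn : 3 ≤ n) (v : Fin n) :
    deg (cycleStar3 n) v = if (v : ℕ) = 0 then n - 1 else if (v : ℕ) < 3 then 2 else 1 := by
  classical
  rw [deg_eq_degree, ← card_neighborFinset_eq_degree]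
  split_ifs with h0 h3
  · rw [show (cycleStar3 n).neighborFinset v = univ.erase v by
      ext w; simp [cycleStar3_adj, h0, eq_comm]]
    simp
  · rw [show (cycleStar3 n).neighborFinset v = {⟨0, by omega⟩, ⟨3 - v, by omega⟩} by
      ext w
      simp only [mem_neighborFinset, cycleStar3_adj, ne_eq, Fin.ext_iff, mem_insert, mem_singleton]
      omega]
    exact card_pair (Fin.ne_of_val_ne (by simp only; omega))
  · rw [show (cycleStar3 n).neighborFinset v = {⟨0, by omega⟩} by
      ext w
      simp only [mem_neighborFinset, cycleStar3_adj, ne_eq, Fin.ext_iff, mem_singleton]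
      omega]
    rfl

theorem HA_cycleStar3 (n : ℕ) (hn : 3 ≤ n) :
    HA (cycleStar3 n) = 3 / 2 * ((n : ℝ) ^ 2 - n + 2) := by
  rw [HA_eq_of_ediam_le_two _ (cycleStar3_ediam_le_two (by omega))]
  obtain ⟨m, rfl⟩ : ∃ m, n = m + 3 := ⟨n - 3, by omega⟩
  have hleaf (i : ℕ) : ¬ i + 1 + 1 + 1 < 3 := by omega
  simp only [Fin.sum_univ_succ, cycleStar3_deg hn, Fin.val_succ, Fin.val_zero]
  norm_num [hleaf]
  ring

theorem stmt6_general (n : ℕ) (hn : 5 ≤ n) :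
    HA (SimpleGraph.cycleGraph n) < HA (cycleStar3 n) ∧
      4 * (n : ℝ) * harmonicNum ((n - 1) / 2) < (3 / 2 : ℝ) * ((n : ℝ) ^ 2 - n + 2) := by
  have hn' : (5 : ℝ) ≤ n := by exact_mod_cast hn
  have hgap : (n : ℝ) * (n + 1) < 3 / 2 * ((n : ℝ) ^ 2 - n + 2) := by nlinarith
  refine ⟨(HA_cycleGraph_le n (by omega)).trans_lt (hgap.trans_eq (HA_cycleStar3 n (by omega)).symm),
    lt_of_le_of_lt ?_ hgap⟩
  obtain ⟨k, hk⟩ : ∃ k, (n - 1) / 2 = k := ⟨_, rfl⟩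
  have hkn : 2 * (k : ℝ) + 1 ≤ n := by exact_mod_cast (by omega : 2 * k + 1 ≤ n)
  calc 4 * (n : ℝ) * harmonicNum ((n - 1) / 2) ≤ 4 * n * ((k + 1) / 2) := by
        rw [hk]; gcongr; exact harmonicNum_le k
    _ ≤ n * (n + 1) := by nlinarith

theorem stmt6 (n : ℕ) (hn : 5 ≤ n) (hodd : Odd n) :
    HA (SimpleGraph.cycleGraph n) < HA (cycleStar3 n) ∧
      4 * (n : ℝ) * harmonicNum ((n - 1) / 2) < (3 / 2 : ℝ) * ((n : ℝ) ^ 2 - n + 2) :=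
  stmt6_general n hn
end

section
/- Let G be a unicyclic graph with cycle C and suppose some vertex y not on C has leaf neighbors z_1, …, z_k (k ≥ 1) and a neighbor x on the path toward C, where all leaf neighbors of y are exactly z_1,…,z_k and y has no other descendants. Let G′ be obtained from G by deleting the edges y z_i and adding the edges x z_i for all i. Then H_A(G) < H_A(G′). -/
open Finset SimpleGraph

/-!
Leaves never lie in the interior of a shortest path, so moving the leaves `Z` of `y` over to `x`
changes no distance between vertices outside `Z`, and the only degrees that change are those of `x`
(up by `k`) and `y` (down by `k`). Pairs avoiding `x` and `y` therefore contribute no less to `H_A`,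
since a leaf only gets closer to everything but `y`. For each vertex `u` the pairs `{u, x}` and
`{u, y}` together contribute no less either, and strictly more, by `k / d - k / (d + 1)` with
`d = d(u, x)`, when `u ∉ Z ∪ {x, y}`. Such a `u` exists: otherwise every edge would contain `y` and
`G` would be a star, not unicyclic.
-/

namespace SimpleGraph

variable {V : Type*} {H H' : SimpleGraph V} {u v : V}

theorem Reachable.exists_walk_length_eq_dist_of_adj_on {S : Set V}
    (hS : ∀ w ∉ S, (H.neighborSet w).Subsingleton)
    (hE : ∀ a ∈ S, ∀ b ∈ S, H.Adj a b → H'.Adj a b)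
    (hr : H.Reachable u v) (hu : u ∈ S) (hv : v ∈ S) :
    ∃ p : H'.Walk u v, p.length = H.dist u v := by
  obtain ⟨p, hp, hl⟩ := hr.exists_path_of_dist
  have hsupp : ∀ w ∈ p.support, w ∈ S := fun w hw => by
    by_contra hwS
    exact hp.isTrail.not_mem_support_of_subsingleton_neighborSet
      (by grind) (by grind) (hS w hwS) hw
  refine ⟨p.transfer H' fun e he => ?_, by rw [Walk.length_transfer, hl]⟩
  induction e with
  | h a b =>
    exact hE a (hsupp a (p.fst_mem_support_of_mem_edges he))
      b (hsupp b (p.snd_mem_support_of_mem_edges he)) (p.adj_of_mem_edges he)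

theorem Reachable.dist_eq_dist_add_one_of_forall_adj {p : V} (hr : H.Reachable u v) (hne : u ≠ v)
    (hadj : H.Adj v p) (hv : ∀ w, H.Adj v w → w = p) :
    H.dist u v = H.dist u p + 1 := by
  apply le_antisymm
  · simpa [dist_comm, dist_eq_one_iff_adj.2 hadj] using
      (hr.trans hadj.reachable).dist_triangle_left v
  · obtain ⟨q, hq⟩ := hr.exists_walk_length_eq_dist
    have hnil : ¬ q.Nil := Walk.not_nil_of_ne hne
    have hpen : q.penultimate = p := hv _ (q.adj_penultimate hnil).symm
    have := dist_le (q.dropLast.copy rfl hpen)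
    rw [Walk.length_copy, Walk.length_dropLast] at this
    have := Walk.not_nil_iff_lt_length.1 hnil
    omega

end SimpleGraph

theorem sum_sum_pos_of_symm {α : Type*} [Fintype α] [DecidableEq α] {g : α → α → ℝ}
    (hg : ∀ u v, g u v = g v u) {x y : α} (hxy : x ≠ y)
    (hpair : ∀ u, 0 ≤ g u x + g u y)
    (hrest : ∀ u v, u ≠ x → u ≠ y → v ≠ x → v ≠ y → 0 ≤ g u v)
    {u₀ : α} (hu₀ : 0 < g u₀ x + g u₀ y) :
    0 < ∑ u, ∑ v, g u v := by
  set B : Finset α := {x, y}ᶜ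
  have hB : ∀ v ∈ B, v ≠ x ∧ v ≠ y := by simp [B]
  have hsplit : ∀ f : α → ℝ, ∑ v, f v = f x + f y + ∑ v ∈ B, f v := fun f => by
    rw [← sum_add_sum_compl {x, y} f, sum_pair hxy]
  have hsum : ∑ u, ∑ v, g u v
      = ∑ u, (g u x + g u y) + ∑ v ∈ B, ((g v x + g v y) + ∑ u ∈ B, g u v) := by
    rw [sum_congr rfl fun u _ => hsplit (g u), sum_add_distrib, sum_comm]
    congr 1
    refine sum_congr rfl fun v _ => ?_
    rw [hsplit (fun u => g u v), hg x, hg y]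
  rw [hsum]
  refine add_pos_of_pos_of_nonneg (sum_pos' (fun u _ => hpair u) ⟨u₀, mem_univ _, hu₀⟩)
    (sum_nonneg fun v hv => add_nonneg (hpair v) (sum_nonneg fun u hu => ?_))
  exact hrest u v (hB u hu).1 (hB u hu).2 (hB v hv).1 (hB v hv).2

section Degree

variable {V : Type*} [Fintype V] {H H' : SimpleGraph V} {v a b : V}

theorem deg_congr (h : ∀ w, H.Adj v w ↔ H'.Adj v w) : deg H v = deg H' v :=
  Nat.card_congr (Equiv.subtypeEquivRight h)

theorem deg_eq_card_of_adj_iff {s : Finset V} (h : ∀ w, H.Adj v w ↔ w ∈ s) : deg H v = #s := by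
  rw [deg, Nat.card_congr (Equiv.subtypeEquivRight h), Nat.card_eq_finsetCard]

theorem deg_eq_card_neighborFinset [DecidableRel H.Adj] : deg H v = #(H.neighborFinset v) :=
  deg_eq_card_of_adj_iff fun _ => (mem_neighborFinset _ _ _).symm

theorem eq_of_deg_eq_one (h : deg H v = 1) (ha : H.Adj v a) (hb : H.Adj v b) : a = b := by
  have := (Nat.card_eq_one_iff_unique.mp h).1
  exact congrArg Subtype.val (Subsingleton.elim (⟨a, ha⟩ : {w // H.Adj v w}) ⟨b, hb⟩)

theorem one_le_deg (h : H.Adj v a) : 1 ≤ deg H v :=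
  have : Nonempty {w // H.Adj v w} := ⟨⟨a, h⟩⟩
  Nat.card_pos

end Degree

section HararyTerm

variable {V : Type*} [Fintype V] {H H' : SimpleGraph V} {u v : V}

open scoped Classical in
noncomputable def haTerm (H : SimpleGraph V) (u v : V) : ℝ :=
  if u = v then 0 else ((deg H u + deg H v : ℕ) : ℝ) / (H.dist u v)

theorem HA_eq_sum_haTerm : HA H = 1 / 2 * ∑ u, ∑ v, haTerm H u v := rfl

@[simp]
theorem haTerm_self : haTerm H u u = 0 := by simp [haTerm]

theorem haTerm_of_ne (h : u ≠ v) :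
    haTerm H u v = ((deg H u + deg H v : ℕ) : ℝ) / (H.dist u v) := by
  simp [haTerm, h]

theorem haTerm_comm : haTerm H u v = haTerm H v u := by
  by_cases h : u = v
  · rw [h]
  · rw [haTerm_of_ne h, haTerm_of_ne (Ne.symm h), dist_comm, add_comm]

theorem haTerm_le_haTerm (hH' : H'.Connected) (hu : deg H' u = deg H u) (hv : deg H' v = deg H v)
    (hd : H'.dist u v ≤ H.dist u v) : haTerm H u v ≤ haTerm H' u v := by
  by_cases h : u = v
  · simp [h]
  rw [haTerm_of_ne h, haTerm_of_ne h, hu, hv]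
  exact div_le_div_of_nonneg_left (by positivity) (by exact_mod_cast hH'.pos_dist_of_ne h)
    (by exact_mod_cast hd)

theorem HA_lt_HA_of_sum_pos (h : 0 < ∑ u, ∑ v, (haTerm H' u v - haTerm H u v)) :
    HA H < HA H' := by
  simp only [sum_sub_distrib] at h
  rw [HA_eq_sum_haTerm, HA_eq_sum_haTerm]
  linarith

end HararyTerm

structure IsPendantShift {V : Type*} (G G' : SimpleGraph V) (x y : V) (Z : Finset V) : Prop where
  adj_xy : G.Adj x y
  adj_y_iff : ∀ w, G.Adj y w ↔ w = x ∨ w ∈ Z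
  eq_of_adj_of_mem : ∀ z ∈ Z, ∀ w, G.Adj z w → w = y
  adj'_iff : ∀ a b, G'.Adj a b ↔ (G.Adj a b ∧ ¬ ((a = y ∧ b ∈ Z) ∨ (b = y ∧ a ∈ Z)))
    ∨ (a = x ∧ b ∈ Z) ∨ (b = x ∧ a ∈ Z)

namespace IsPendantShift

variable {V : Type*} {G G' : SimpleGraph V} {x y z u v : V} {Z : Finset V}

theorem ne (h : IsPendantShift G G' x y Z) : x ≠ y := h.adj_xy.ne

theorem x_notMem (h : IsPendantShift G G' x y Z) : x ∉ Z := fun hx =>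
  G'.irrefl ((h.adj'_iff x x).2 (Or.inr (Or.inl ⟨rfl, hx⟩)))

theorem y_notMem (h : IsPendantShift G G' x y Z) : y ∉ Z := fun hy =>
  h.ne (h.eq_of_adj_of_mem y hy x h.adj_xy.symm)

theorem adj_of_mem (h : IsPendantShift G G' x y Z) (hz : z ∈ Z) : G.Adj y z :=
  (h.adj_y_iff z).2 (Or.inr hz)

theorem adj'_of_mem_iff (h : IsPendantShift G G' x y Z) (hz : z ∈ Z) (w : V) :
    G'.Adj z w ↔ w = x := by
  have := h.eq_of_adj_of_mem z hz w
  have := h.x_notMem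
  have := h.y_notMem
  rw [h.adj'_iff]
  grind

theorem adj'_y_iff (h : IsPendantShift G G' x y Z) (w : V) : G'.Adj y w ↔ w = x := by
  have := h.adj_y_iff w
  have := h.adj_xy
  have := h.ne
  have := h.x_notMem
  have := h.y_notMem
  rw [h.adj'_iff]
  grind

theorem adj'_x_iff (h : IsPendantShift G G' x y Z) (w : V) : G'.Adj x w ↔ G.Adj x w ∨ w ∈ Z := by
  have := h.ne
  have := h.x_notMem
  rw [h.adj'_iff]
  grind

theorem adj'_iff_adj (h : IsPendantShift G G' x y Z) {a b : V} (ha : a ∉ Z) (hb : b ∉ Z) :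
    G'.Adj a b ↔ G.Adj a b := by
  rw [h.adj'_iff]
  grind

theorem adj'_iff_adj_of_ne (h : IsPendantShift G G' x y Z) (hx : u ≠ x) (hy : u ≠ y) (hZ : u ∉ Z)
    (w : V) : G'.Adj u w ↔ G.Adj u w := by
  have := fun hw => h.eq_of_adj_of_mem w hw u
  rw [h.adj'_iff]
  grind [G.adj_comm]

theorem subsingleton_neighborSet (h : IsPendantShift G G' x y Z) (hz : z ∈ Z) :
    (G.neighborSet z).Subsingleton := fun a ha b hb =>
  (h.eq_of_adj_of_mem z hz a ha).trans (h.eq_of_adj_of_mem z hz b hb).symm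

theorem subsingleton_neighborSet' (h : IsPendantShift G G' x y Z) (hz : z ∈ Z) :
    (G'.neighborSet z).Subsingleton := fun a ha b hb =>
  ((h.adj'_of_mem_iff hz a).1 ha).trans ((h.adj'_of_mem_iff hz b).1 hb).symm

theorem exists_walk'_length_eq_dist (h : IsPendantShift G G' x y Z) (hr : G.Reachable u v)
    (hu : u ∉ Z) (hv : v ∉ Z) : ∃ p : G'.Walk u v, p.length = G.dist u v :=
  hr.exists_walk_length_eq_dist_of_adj_on (S := (↑Z)ᶜ)
    (fun _ hw => h.subsingleton_neighborSet (by simpa using hw))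
    (fun _ ha _ hb => (h.adj'_iff_adj ha hb).2) hu hv

theorem exists_walk_length_eq_dist' (h : IsPendantShift G G' x y Z) (hr : G'.Reachable u v)
    (hu : u ∉ Z) (hv : v ∉ Z) : ∃ p : G.Walk u v, p.length = G'.dist u v :=
  hr.exists_walk_length_eq_dist_of_adj_on (S := (↑Z)ᶜ)
    (fun _ hw => h.subsingleton_neighborSet' (by simpa using hw))
    (fun _ ha _ hb => (h.adj'_iff_adj ha hb).1) hu hv

theorem connected' (h : IsPendantShift G G' x y Z) (hG : G.Connected) : G'.Connected := by
  refine (connected_iff_exists_forall_reachable G').2 ⟨x, fun w => ?_⟩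
  by_cases hw : w ∈ Z
  · exact ((h.adj'_of_mem_iff hw x).2 rfl).symm.reachable
  · obtain ⟨p, -⟩ := h.exists_walk'_length_eq_dist (hG x w) h.x_notMem hw
    exact ⟨p⟩

theorem dist'_eq (h : IsPendantShift G G' x y Z) (hG : G.Connected) (hu : u ∉ Z) (hv : v ∉ Z) :
    G'.dist u v = G.dist u v := by
  obtain ⟨p, hp⟩ := h.exists_walk'_length_eq_dist (hG u v) hu hv
  obtain ⟨q, hq⟩ := h.exists_walk_length_eq_dist' (h.connected' hG u v) hu hv
  exact le_antisymm (hp ▸ dist_le p) (hq ▸ dist_le q)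

theorem dist_of_mem (h : IsPendantShift G G' x y Z) (hG : G.Connected) (hz : z ∈ Z) (hu : u ≠ z) :
    G.dist u z = G.dist u y + 1 :=
  (hG u z).dist_eq_dist_add_one_of_forall_adj hu (h.adj_of_mem hz).symm (h.eq_of_adj_of_mem z hz)

theorem dist'_of_mem (h : IsPendantShift G G' x y Z) (hG : G.Connected) (hz : z ∈ Z)
    (hu : u ≠ z) : G'.dist u z = G'.dist u x + 1 :=
  (h.connected' hG u z).dist_eq_dist_add_one_of_forall_adj hu ((h.adj'_of_mem_iff hz x).2 rfl)
    fun w => (h.adj'_of_mem_iff hz w).1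

theorem dist'_y (h : IsPendantShift G G' x y Z) (hG : G.Connected) (hu : u ≠ y) :
    G'.dist u y = G'.dist u x + 1 :=
  (h.connected' hG u y).dist_eq_dist_add_one_of_forall_adj hu ((h.adj'_y_iff x).2 rfl)
    fun w => (h.adj'_y_iff w).1

theorem dist_y (h : IsPendantShift G G' x y Z) (hG : G.Connected) (hu : u ≠ y) (huZ : u ∉ Z) :
    G.dist u y = G.dist u x + 1 := by
  rw [← h.dist'_eq hG huZ h.y_notMem, ← h.dist'_eq hG huZ h.x_notMem, h.dist'_y hG hu]

theorem dist'_le (h : IsPendantShift G G' x y Z) (hG : G.Connected) (hu : u ≠ y) (hv : v ≠ y) :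
    G'.dist u v ≤ G.dist u v := by
  have hleaf : ∀ {a z}, a ≠ y → a ∉ Z → z ∈ Z → G'.dist a z ≤ G.dist a z := by
    intro a z hay haZ hz
    have haz : a ≠ z := fun e => haZ (e ▸ hz)
    rw [h.dist'_of_mem hG hz haz, h.dist_of_mem hG hz haz, h.dist_y hG hay haZ,
      h.dist'_eq hG haZ h.x_notMem]
    omega
  by_cases huZ : u ∈ Z <;> by_cases hvZ : v ∈ Z
  · by_cases huv : u = v
    · simp [huv]
    rw [h.dist'_of_mem hG hvZ huv, h.dist_of_mem hG hvZ huv,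
      dist_eq_one_iff_adj.2 ((h.adj'_of_mem_iff huZ x).2 rfl),
      dist_eq_one_iff_adj.2 (h.adj_of_mem huZ).symm]
  · rw [dist_comm, dist_comm (G := G)]
    exact hleaf hv hvZ huZ
  · exact hleaf hu huZ hvZ
  · exact (h.dist'_eq hG huZ hvZ).le

variable [Fintype V]

theorem deg_y (h : IsPendantShift G G' x y Z) : deg G y = #Z + 1 := by
  classical
  rw [deg_eq_card_of_adj_iff (s := insert x Z) (by simpa using h.adj_y_iff),
    card_insert_of_notMem h.x_notMem]

theorem deg'_y (h : IsPendantShift G G' x y Z) : deg G' y = 1 :=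
  deg_eq_card_of_adj_iff (s := {x}) (by simpa using h.adj'_y_iff)

theorem deg_of_mem (h : IsPendantShift G G' x y Z) (hz : z ∈ Z) : deg G z = 1 :=
  deg_eq_card_of_adj_iff (s := {y}) fun w => by
    simpa using ⟨h.eq_of_adj_of_mem z hz w, fun hw => hw ▸ (h.adj_of_mem hz).symm⟩

theorem deg'_of_mem (h : IsPendantShift G G' x y Z) (hz : z ∈ Z) : deg G' z = 1 :=
  deg_eq_card_of_adj_iff (s := {x}) (by simpa using h.adj'_of_mem_iff hz)

theorem deg'_x (h : IsPendantShift G G' x y Z) : deg G' x = deg G x + #Z := by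
  classical
  have hdisj : Disjoint (G.neighborFinset x) Z := disjoint_left.2 fun w hw hwZ =>
    h.ne (h.eq_of_adj_of_mem w hwZ x ((mem_neighborFinset _ _ _).1 hw).symm)
  rw [deg_eq_card_of_adj_iff (s := G.neighborFinset x ∪ Z) (by simpa using h.adj'_x_iff),
    card_union_of_disjoint hdisj, deg_eq_card_neighborFinset]

theorem deg'_eq (h : IsPendantShift G G' x y Z) (hx : u ≠ x) (hy : u ≠ y) : deg G' u = deg G u := by
  by_cases hZ : u ∈ Z
  · rw [h.deg_of_mem hZ, h.deg'_of_mem hZ]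
  · exact deg_congr (h.adj'_iff_adj_of_ne hx hy hZ)

theorem haTerm'_xy (h : IsPendantShift G G' x y Z) : haTerm G' x y = haTerm G x y := by
  rw [haTerm_of_ne h.ne, haTerm_of_ne h.ne, dist_eq_one_iff_adj.2 h.adj_xy,
    dist_eq_one_iff_adj.2 ((h.adj'_x_iff y).2 (Or.inl h.adj_xy)), h.deg'_x, h.deg'_y, h.deg_y,
    add_assoc]

theorem gain_of_mem (h : IsPendantShift G G' x y Z) (hG : G.Connected) (hz : z ∈ Z) :
    0 ≤ (haTerm G' z x - haTerm G z x) + (haTerm G' z y - haTerm G z y) := by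
  have hzx : z ≠ x := fun e => h.x_notMem (e ▸ hz)
  have hzy : z ≠ y := fun e => h.y_notMem (e ▸ hz)
  have hdx : G.dist z x = 2 := by
    rw [dist_comm, h.dist_of_mem hG hz hzx.symm, dist_eq_one_iff_adj.2 h.adj_xy]
  have hdy' : G'.dist z y = 2 := by
    rw [dist_comm, h.dist'_of_mem hG hz hzy.symm, dist_eq_one_iff_adj.2 ((h.adj'_y_iff x).2 rfl)]
  have hdegx : (1 : ℝ) ≤ deg G x := by exact_mod_cast one_le_deg h.adj_xy
  rw [haTerm_of_ne hzx, haTerm_of_ne hzx, haTerm_of_ne hzy, haTerm_of_ne hzy, hdx, hdy',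
    dist_eq_one_iff_adj.2 ((h.adj'_of_mem_iff hz x).2 rfl),
    dist_eq_one_iff_adj.2 (h.adj_of_mem hz).symm,
    h.deg_of_mem hz, h.deg'_of_mem hz, h.deg'_x, h.deg'_y, h.deg_y]
  push_cast
  linarith

theorem gain_of_notMem (h : IsPendantShift G G' x y Z) (hG : G.Connected) (hx : u ≠ x) (hy : u ≠ y)
    (huZ : u ∉ Z) : (haTerm G' u x - haTerm G u x) + (haTerm G' u y - haTerm G u y)
      = #Z / (G.dist u x : ℝ) - #Z / (G.dist u x + 1 : ℝ) := by
  have hd : (0 : ℝ) < G.dist u x := by exact_mod_cast hG.pos_dist_of_ne hx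
  rw [haTerm_of_ne hx, haTerm_of_ne hx, haTerm_of_ne hy, haTerm_of_ne hy,
    h.dist'_eq hG huZ h.x_notMem, h.dist'_eq hG huZ h.y_notMem, h.dist_y hG hy huZ,
    h.deg'_eq hx hy, h.deg'_x, h.deg'_y, h.deg_y]
  push_cast
  field_simp
  ring

theorem gain_nonneg (h : IsPendantShift G G' x y Z) (hG : G.Connected) (u : V) :
    0 ≤ (haTerm G' u x - haTerm G u x) + (haTerm G' u y - haTerm G u y) := by
  by_cases hx : u = x
  · simp [hx, h.haTerm'_xy]
  by_cases hy : u = y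
  · simp [hy, haTerm_comm (u := y), h.haTerm'_xy]
  by_cases huZ : u ∈ Z
  · exact h.gain_of_mem hG huZ
  rw [h.gain_of_notMem hG hx hy huZ, sub_nonneg]
  exact div_le_div_of_nonneg_left (by positivity) (by exact_mod_cast hG.pos_dist_of_ne hx)
    (by linarith)

theorem gain_pos (h : IsPendantShift G G' x y Z) (hG : G.Connected) (hZ : Z.Nonempty) (hx : u ≠ x)
    (hy : u ≠ y) (huZ : u ∉ Z) :
    0 < (haTerm G' u x - haTerm G u x) + (haTerm G' u y - haTerm G u y) := by
  rw [h.gain_of_notMem hG hx hy huZ, sub_pos]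
  exact div_lt_div_of_pos_left (by exact_mod_cast hZ.card_pos)
    (by exact_mod_cast hG.pos_dist_of_ne hx) (by linarith)

theorem HA_lt (h : IsPendantShift G G' x y Z) (hG : G.Connected) (hZ : Z.Nonempty) (hx : u ≠ x)
    (hy : u ≠ y) (huZ : u ∉ Z) : HA G < HA G' := by
  classical
  refine HA_lt_HA_of_sum_pos <| sum_sum_pos_of_symm
    (fun a b => by rw [haTerm_comm, haTerm_comm (H := G)]) h.ne (h.gain_nonneg hG)
    (fun a b hax hay hbx hby => ?_) (h.gain_pos hG hZ hx hy huZ)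
  exact sub_nonneg.2 (haTerm_le_haTerm (h.connected' hG) (h.deg'_eq hax hay) (h.deg'_eq hbx hby)
    (h.dist'_le hG hay hby))

theorem card_edgeSet_le (h : IsPendantShift G G' x y Z) (hV : ∀ u, u = x ∨ u = y ∨ u ∈ Z) :
    Nat.card G.edgeSet ≤ #Z + 1 := by
  classical
  have hsub : G.edgeSet ⊆ G.incidenceSet y := by
    intro e he
    refine ⟨he, ?_⟩
    induction e with
    | h a b =>
      have hab : G.Adj a b := he
      have := h.eq_of_adj_of_mem a
      have := h.eq_of_adj_of_mem b
      have := hV a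
      have := hV b
      have := G.irrefl (v := x)
      grind [G.adj_comm]
  rw [← h.deg_y]
  calc Nat.card G.edgeSet ≤ Nat.card (G.incidenceSet y) := Nat.card_mono (Set.toFinite _) hsub
    _ = deg G y := Nat.card_congr (G.incidenceSetEquivNeighborSet y)

theorem card_add_two_le (h : IsPendantShift G G' x y Z) : #Z + 2 ≤ Fintype.card V := by
  classical
  calc #Z + 2 = #(insert x (insert y Z)) := by
        rw [card_insert_of_notMem, card_insert_of_notMem h.y_notMem]
        simp [h.ne, h.x_notMem]
    _ ≤ Fintype.card V := card_le_univ _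

theorem exists_ne_of_card_le (h : IsPendantShift G G' x y Z)
    (hcard : Fintype.card V ≤ Nat.card G.edgeSet) : ∃ u, u ≠ x ∧ u ≠ y ∧ u ∉ Z := by
  by_contra! hV
  have := h.card_edgeSet_le fun u => by grind
  have := h.card_add_two_le
  omega

end IsPendantShift

theorem stmt11_general {V : Type*} [Fintype V] (G G' : SimpleGraph V) (hG : Unicyclic G)
    (x y : V) (k : ℕ) (hk : 1 ≤ k) (z : Fin k → V)
    (hxy : G.Adj x y)
    (hleaf : ∀ i, G.Adj y (z i) ∧ deg G (z i) = 1)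
    (hnbr : ∀ w, G.Adj y w ↔ w = x ∨ ∃ i, w = z i)
    (hG' : ∀ a b, G'.Adj a b ↔
      ((G.Adj a b ∧ ¬ ∃ i, (a = y ∧ b = z i) ∨ (b = y ∧ a = z i))
        ∨ ∃ i, (a = x ∧ b = z i) ∨ (b = x ∧ a = z i))) :
    HA G < HA G' := by
  classical
  have h : IsPendantShift G G' x y (univ.image z) := by
    refine ⟨hxy, fun w => ?_, ?_, fun a b => ?_⟩
    · simpa [eq_comm] using hnbr w
    · simp only [mem_image, mem_univ, true_and, forall_exists_index, forall_apply_eq_imp_iff]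
      exact fun i w hw => eq_of_deg_eq_one (hleaf i).2 hw (hleaf i).1.symm
    · simp only [hG' a b, mem_image, mem_univ, true_and]
      grind
  obtain ⟨u, hux, huy, huZ⟩ := h.exists_ne_of_card_le hG.2.ge
  exact h.HA_lt hG.1 ⟨z ⟨0, hk⟩, mem_image_of_mem z (mem_univ _)⟩ hux huy huZ

theorem stmt11 {V : Type*} [Fintype V] (G G' : SimpleGraph V) (hG : Unicyclic G)
    (x y : V) (k : ℕ) (hk : 1 ≤ k) (z : Fin k → V) (hz : Function.Injective z)
    (hyC : ¬ OnCycle G y) (hxy : G.Adj x y)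
    (hleaf : ∀ i, G.Adj y (z i) ∧ deg G (z i) = 1)
    (hnbr : ∀ w, G.Adj y w ↔ w = x ∨ ∃ i, w = z i)
    (hG' : ∀ a b, G'.Adj a b ↔
      ((G.Adj a b ∧ ¬ ∃ i, (a = y ∧ b = z i) ∨ (b = y ∧ a = z i))
        ∨ ∃ i, (a = x ∧ b = z i) ∨ (b = x ∧ a = z i))) :
    HA G < HA G' :=
  stmt11_general G G' hG x y k hk z hxy hleaf hnbr hG'
end
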